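/- The Pareto front of OneJumpZeroJump_{n,k} (2 ≤ k ≤ n/4) is exactly {(i, n + 2k − i) : i ∈ [2k, n] ∪ {k, n+k}}, which has size n − 2k + 3. -/
import Mathlib


def ones {n : ℕ} (x : Fin n → Bool) : ℕ := (Finset.univ.filter fun i => x i = true).card

def zeros {n : ℕ} (x : Fin n → Bool) : ℕ := (Finset.univ.filter fun i => x i = false).card

/-- First objective of OneJumpZeroJump_{n,k}. -/
def ojzjF1 (n k : ℕ) (x : Fin n → Bool) : ℤ :=
  if ones x ≤ n - k ∨ x = (fun _ => true) then (k : ℤ) + ones x else (n : ℤ) - ones x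

/-- Second objective of OneJumpZeroJump_{n,k}. -/
def ojzjF2 (n k : ℕ) (x : Fin n → Bool) : ℤ :=
  if zeros x ≤ n - k ∨ x = (fun _ => false) then (k : ℤ) + zeros x else (n : ℤ) - zeros x

def ojzjF (n k : ℕ) (x : Fin n → Bool) : ℤ × ℤ := (ojzjF1 n k x, ojzjF2 n k x)

def dominates {n : ℕ} (f : (Fin n → Bool) → ℤ × ℤ) (y x : Fin n → Bool) : Prop :=
  (f x).1 ≤ (f y).1 ∧ (f x).2 ≤ (f y).2 ∧ ((f x).1 < (f y).1 ∨ (f x).2 < (f y).2)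

def paretoOptimal {n : ℕ} (f : (Fin n → Bool) → ℤ × ℤ) (x : Fin n → Bool) : Prop :=
  ¬ ∃ y : Fin n → Bool, dominates f y x

section Aux
variable {n k : ℕ}

lemma ones_add_zeros (x : Fin n → Bool) : ones x + zeros x = n := by
  classical
  have h := Finset.card_filter_add_card_filter_not
    (s := (Finset.univ : Finset (Fin n))) (p := fun i => x i = true)
  simpa [ones, zeros, Bool.not_eq_true] using h

lemma ones_le (x : Fin n → Bool) : ones x ≤ n := by
  have := Finset.card_filter_le (Finset.univ : Finset (Fin n)) (fun i => x i = true)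
  simpa [ones] using this

lemma eq_allTrue (x : Fin n → Bool) (h : ones x = n) : x = fun _ => true := by
  funext i
  by_contra hi
  have hsub : (Finset.univ.filter fun j => x j = true) ⊆ Finset.univ.erase i := by
    intro j hj
    simp only [Finset.mem_filter, Finset.mem_univ, true_and] at hj
    simp only [Finset.mem_erase, Finset.mem_univ, and_true]
    rintro rfl; exact hi hj
  have hc := Finset.card_le_card hsub
  rw [Finset.card_erase_of_mem (Finset.mem_univ i)] at hc
  have hn : 0 < n := i.pos
  simp only [Finset.card_univ, Fintype.card_fin] at hc
  rw [ones] at h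
  omega

lemma eq_allFalse (x : Fin n → Bool) (h : zeros x = n) : x = fun _ => false := by
  funext i
  by_contra hi
  have hsub : (Finset.univ.filter fun j => x j = false) ⊆ Finset.univ.erase i := by
    intro j hj
    simp only [Finset.mem_filter, Finset.mem_univ, true_and] at hj
    simp only [Finset.mem_erase, Finset.mem_univ, and_true]
    rintro rfl; exact hi hj
  have hc := Finset.card_le_card hsub
  rw [Finset.card_erase_of_mem (Finset.mem_univ i)] at hc
  have hn : 0 < n := i.pos
  simp only [Finset.card_univ, Fintype.card_fin] at hc
  rw [zeros] at h
  omega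

lemma exists_ones (j : ℕ) (hj : j ≤ n) : ∃ x : Fin n → Bool, ones x = j := by
  refine ⟨fun i => decide ((i : ℕ) < j), ?_⟩
  rcases eq_or_lt_of_le hj with rfl | hlt
  · have : (Finset.univ.filter fun i : Fin j => (decide ((i : ℕ) < j)) = true) = Finset.univ := by
      ext i; simp [i.isLt]
    rw [ones, this, Finset.card_univ, Fintype.card_fin]
  · have : (Finset.univ.filter fun i : Fin n => (decide ((i : ℕ) < j)) = true)
        = Finset.Iio (⟨j, hlt⟩ : Fin n) := by
      ext i; simp [Fin.lt_def]
    rw [ones, this, Fin.card_Iio]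

end Aux

section Vals
variable {n k : ℕ}

lemma f1_low (x : Fin n → Bool) (h : ones x ≤ n - k) :
    ojzjF1 n k x = (k : ℤ) + ones x := if_pos (Or.inl h)

lemma f1_top (x : Fin n → Bool) (h : ones x = n) :
    ojzjF1 n k x = (k : ℤ) + n := by
  rw [ojzjF1, if_pos (Or.inr (eq_allTrue x h)), h]

lemma f1_gap (x : Fin n → Bool) (h1 : ¬ ones x ≤ n - k) (h2 : ones x ≠ n) :
    ojzjF1 n k x = (n : ℤ) - ones x := by
  rw [ojzjF1, if_neg]
  rintro (h | h)
  · exact h1 h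
  · exact h2 (by simp [h, ones, Finset.card_univ])

lemma f2_high (x : Fin n → Bool) (hkn : k ≤ n) (h : k ≤ ones x) :
    ojzjF2 n k x = (k : ℤ) + n - ones x := by
  have hz := ones_add_zeros x
  rw [ojzjF2, if_pos (Or.inl (by omega))]
  omega

lemma f2_bot (x : Fin n → Bool) (h : ones x = 0) :
    ojzjF2 n k x = (k : ℤ) + n := by
  have hz := ones_add_zeros x
  rw [ojzjF2, if_pos (Or.inr (eq_allFalse x (by omega)))]
  omega

lemma f2_gap (x : Fin n → Bool) (hkn : k ≤ n) (h1 : 0 < ones x) (h2 : ones x < k) :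
    ojzjF2 n k x = (ones x : ℤ) := by
  have hz := ones_add_zeros x
  rw [ojzjF2, if_neg]
  · omega
  rintro (h | h)
  · omega
  · have : zeros x = n := by simp [h, zeros, Finset.card_univ]
    omega

lemma sum_le (hk2 : 2 ≤ k) (hn : 4 * k ≤ n) (x : Fin n → Bool) :
    ojzjF1 n k x + ojzjF2 n k x ≤ (n : ℤ) + 2 * k := by
  have hm := ones_le x
  have hkn : k ≤ n := by omega
  by_cases h1 : ones x ≤ n - k
  · rw [f1_low x h1]
    by_cases h2 : k ≤ ones x
    · rw [f2_high x hkn h2]; omega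
    · by_cases h0 : ones x = 0
      · rw [f2_bot x h0]; omega
      · rw [f2_gap x hkn (by omega) (by omega)]; omega
  · by_cases hn' : ones x = n
    · rw [f1_top x hn', f2_high x hkn (by omega)]; omega
    · rw [f1_gap x h1 hn', f2_high x hkn (by omega)]; omega

end Vals

section Main2
variable {n k : ℕ}

lemma pareto_of_sum (hk2 : 2 ≤ k) (hn : 4 * k ≤ n) (x : Fin n → Bool)
    (hs : ojzjF1 n k x + ojzjF2 n k x = (n : ℤ) + 2 * k) :
    paretoOptimal (ojzjF n k) x := by
  rintro ⟨y, h1, h2, h3⟩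
  have hy := sum_le hk2 hn y
  simp only [ojzjF] at h1 h2 h3
  rcases h3 with h3 | h3 <;> omega

end Main2

theorem ojzj_pareto_front (n k : ℕ) (h2 : 2 ≤ k) (hk : 4 * k ≤ n) :
    {p : ℤ × ℤ | ∃ x : Fin n → Bool, paretoOptimal (ojzjF n k) x ∧ p = ojzjF n k x}
      = {p : ℤ × ℤ | ∃ i : ℕ, ((2 * k ≤ i ∧ i ≤ n) ∨ i = k ∨ i = n + k) ∧
          p = ((i : ℤ), (n : ℤ) + 2 * k - i)} ∧
    {p : ℤ × ℤ | ∃ i : ℕ, ((2 * k ≤ i ∧ i ≤ n) ∨ i = k ∨ i = n + k) ∧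
          p = ((i : ℤ), (n : ℤ) + 2 * k - i)}.ncard = n - 2 * k + 3 := by
  have hkn : k ≤ n := by omega
  constructor
  · ext p
    simp only [Set.mem_setOf_eq]
    constructor
    · rintro ⟨x, hpo, rfl⟩
      have hm := ones_le x
      by_cases h1 : ones x ≤ n - k
      · by_cases hge : k ≤ ones x
        · refine ⟨k + ones x, Or.inl ⟨by omega, by omega⟩, ?_⟩
          simp only [ojzjF, f1_low x h1, f2_high x hkn hge, Prod.mk.injEq]
          constructor <;> push_cast <;> ring
        · by_cases h0 : ones x = 0
          · refine ⟨k, Or.inr (Or.inl rfl), ?_⟩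
            simp only [ojzjF, f1_low x h1, f2_bot x h0, h0, Prod.mk.injEq]
            constructor <;> push_cast <;> ring
          · exfalso
            obtain ⟨y, hy⟩ := exists_ones k hkn
            apply hpo
            refine ⟨y, ?_⟩
            have e1 : ojzjF1 n k y = (k : ℤ) + k := by rw [f1_low (k := k) y (by omega), hy]
            have e2 : ojzjF2 n k y = (k : ℤ) + n - k := by rw [f2_high (k := k) y hkn (by omega), hy]
            have ex1 : ojzjF1 n k x = (k : ℤ) + ones x := f1_low x h1
            have ex2 : ojzjF2 n k x = (ones x : ℤ) := f2_gap x hkn (by omega) (by omega)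
            simp only [dominates, ojzjF]
            rw [e1, e2, ex1, ex2]
            exact ⟨by omega, by omega, Or.inl (by omega)⟩
      · by_cases hn' : ones x = n
        · refine ⟨n + k, Or.inr (Or.inr rfl), ?_⟩
          simp only [ojzjF, f1_top x hn', f2_high x hkn (by omega), hn', Prod.mk.injEq]
          constructor <;> push_cast <;> ring
        · exfalso
          obtain ⟨y, hy⟩ := exists_ones (n := n) (n - k) (by omega)
          apply hpo
          refine ⟨y, ?_⟩
          have e1 : ojzjF1 n k y = (k : ℤ) + (n - k : ℕ) := by rw [f1_low (k := k) y (by omega), hy]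
          have e2 : ojzjF2 n k y = (k : ℤ) + n - (n - k : ℕ) := by
            rw [f2_high (k := k) y hkn (by omega), hy]
          have ex1 : ojzjF1 n k x = (n : ℤ) - ones x := f1_gap x h1 hn'
          have ex2 : ojzjF2 n k x = (k : ℤ) + n - ones x := f2_high x hkn (by omega)
          simp only [dominates, ojzjF]
          rw [e1, e2, ex1, ex2]
          exact ⟨by omega, by omega, Or.inl (by omega)⟩
    · rintro ⟨i, hi, rfl⟩
      rcases hi with ⟨hi1, hi2⟩ | h | h
      · obtain ⟨x, hx⟩ := exists_ones (n := n) (i - k) (by omega)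
        have e1 : ojzjF1 n k x = (k : ℤ) + (i - k : ℕ) := by rw [f1_low (k := k) x (by omega), hx]
        have e2 : ojzjF2 n k x = (k : ℤ) + n - (i - k : ℕ) := by
          rw [f2_high (k := k) x hkn (by omega), hx]
        refine ⟨x, pareto_of_sum h2 hk x (by rw [e1, e2]; omega), ?_⟩
        simp only [ojzjF, e1, e2, Prod.mk.injEq]
        constructor <;> omega
      · obtain ⟨x, hx⟩ := exists_ones (n := n) 0 (by omega)
        have e1 : ojzjF1 n k x = (k : ℤ) + 0 := by rw [f1_low (k := k) x (by omega), hx]; norm_num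
        have e2 : ojzjF2 n k x = (k : ℤ) + n := f2_bot x hx
        refine ⟨x, pareto_of_sum h2 hk x (by rw [e1, e2]; omega), ?_⟩
        simp only [ojzjF, e1, e2, Prod.mk.injEq]
        constructor <;> omega
      · obtain ⟨x, hx⟩ := exists_ones n le_rfl
        have e1 : ojzjF1 n k x = (k : ℤ) + n := f1_top x hx
        have e2 : ojzjF2 n k x = (k : ℤ) + n - n := by rw [f2_high (k := k) x hkn (by omega), hx]
        refine ⟨x, pareto_of_sum h2 hk x (by rw [e1, e2]; omega), ?_⟩
        simp only [ojzjF, e1, e2, Prod.mk.injEq]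
        constructor <;> omega
  · have hg : Function.Injective (fun i : ℕ => ((i : ℤ), (n : ℤ) + 2 * k - i)) := by
      intro a b hab
      simp only [Prod.mk.injEq] at hab
      exact_mod_cast hab.1
    have hFset : {p : ℤ × ℤ | ∃ i : ℕ, ((2 * k ≤ i ∧ i ≤ n) ∨ i = k ∨ i = n + k) ∧
          p = ((i : ℤ), (n : ℤ) + 2 * k - i)}
        = ↑((insert k (insert (n + k) (Finset.Icc (2 * k) n))).image
            (fun i : ℕ => ((i : ℤ), (n : ℤ) + 2 * k - i))) := by
      ext p
      simp only [Set.mem_setOf_eq, Finset.coe_image, Set.mem_image, Finset.mem_coe,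
        Finset.mem_insert, Finset.mem_Icc]
      constructor
      · rintro ⟨i, hi, rfl⟩; exact ⟨i, by tauto, rfl⟩
      · rintro ⟨i, hi, rfl⟩; exact ⟨i, by tauto, rfl⟩
    rw [hFset, Set.ncard_coe_finset, Finset.card_image_of_injective _ hg,
      Finset.card_insert_of_notMem (by simp only [Finset.mem_insert, Finset.mem_Icc]; omega),
      Finset.card_insert_of_notMem (by simp only [Finset.mem_Icc]; omega),
      Nat.card_Icc]
    omega
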